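/- Let n ≥ 2 and let A be a Young function satisfying condition (δ) with exponents 1 < p⁻ ≤ p⁺ < n and conditions (A2) and (A3). Then there exist constants C₁, C₂ > 0 (depending only on A and n) such that C₁·t^{(n−p⁺)/n} ≤ H(t) ≤ C₂·t^{(n−p⁻)/n} for all t > 1; consequently, for the inverse H⁻¹ of the strictly increasing function H, there exist constants c₁, c₂ > 0 such that c₁·t^{n/(n−p⁻)} ≤ H⁻¹(t) ≤ c₂·t^{n/(n−p⁺)} for all t > 1. -/

import Mathlib

open MeasureTheory Filter Set

noncomputable section

/-- `A` is a Young function with density `a`. -/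
def IsYoungPair (a A : ℝ → ℝ) : Prop :=
  a 0 = 0 ∧ (∀ s, 0 < s → 0 < a s) ∧
  (∀ s, 0 ≤ s → ContinuousWithinAt a (Set.Ici s) s) ∧
  MonotoneOn a (Set.Ioi 0) ∧
  ∀ t, 0 ≤ t → A t = ∫ τ in (0:ℝ)..t, a τ

/-- The function `H(t) = (∫₀ᵗ (τ/A(τ))^{1/(n-1)} dτ)^{(n-1)/n}`. -/
def Hfun (A : ℝ → ℝ) (n : ℕ) (t : ℝ) : ℝ :=
  (∫ τ in (0:ℝ)..t, (τ / A τ) ^ ((1:ℝ) / ((n:ℝ) - 1))) ^ (((n:ℝ) - 1) / (n:ℝ))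

open intervalIntegral Topology

section Aux

variable {a A : ℝ → ℝ}
variable (ha0 : a 0 = 0) (hapos : ∀ s, 0 < s → 0 < a s)
  (harc : ∀ s, 0 ≤ s → ContinuousWithinAt a (Set.Ici s) s)
  (hamono : MonotoneOn a (Set.Ioi 0))
  (hAdef : ∀ t, 0 ≤ t → A t = ∫ τ in (0:ℝ)..t, a τ)

include ha0 hapos hamono in
private lemma amono' : MonotoneOn a (Set.Ici 0) := by
  intro u hu v hv huv
  rcases eq_or_lt_of_le (Set.mem_Ici.mp hu : (0:ℝ) ≤ u) with h | h
  · rw [← h, ha0]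
    rcases eq_or_lt_of_le (Set.mem_Ici.mp hv : (0:ℝ) ≤ v) with h2 | h2
    · rw [← h2, ha0]
    · exact (hapos v h2).le
  · exact hamono h (lt_of_lt_of_le h huv) huv

include ha0 hapos in
omit harc in
private lemma anneg : ∀ s, 0 ≤ s → 0 ≤ a s := by
  intro s hs
  rcases eq_or_lt_of_le hs with h | h
  · simp [← h, ha0]
  · exact (hapos s h).le

include ha0 hapos hamono in
private lemma aInt : ∀ t, 0 ≤ t → IntervalIntegrable a volume 0 t := by
  intro t ht
  apply MonotoneOn.intervalIntegrable
  exact (amono' ha0 hapos hamono).mono (by rw [uIcc_of_le ht]; exact Icc_subset_Ici_self)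

include ha0 hapos harc hamono hAdef in
private lemma Aderiv : ∀ x, 0 ≤ x → HasDerivWithinAt A (a x) (Set.Ici x) x := by
  intro x hx
  set atil : ℝ → ℝ := fun s => a (max s 0) with hatil
  have hmon : Monotone atil := by
    intro u v huv
    exact amono' ha0 hapos hamono (le_max_right u 0) (le_max_right v 0)
      (max_le_max huv le_rfl)
  have hmeas : AEStronglyMeasurable a (volume.restrict (Set.Ioi x)) := by
    refine (hmon.measurable.aestronglyMeasurable (α := ℝ)).congr ?_
    rw [Filter.EventuallyEq, ae_restrict_iff' measurableSet_Ioi]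
    refine ae_of_all _ fun y hy => ?_
    simp [hatil, max_eq_left (hx.trans hy.out.le)]
  have h0 : HasDerivWithinAt (fun u => ∫ τ in (0:ℝ)..u, a τ) (a x) (Set.Ici x) x := by
    exact integral_hasDerivWithinAt_right (aInt ha0 hapos hamono x hx)
      ⟨Set.Ioi x, self_mem_nhdsWithin, hmeas⟩ ((harc x hx).mono Set.Ioi_subset_Ici_self)
  exact h0.congr (fun y hy => hAdef y (hx.trans hy)) (hAdef x hx)

include ha0 hapos hamono hAdef in
private lemma Acont : ContinuousOn A (Set.Ici 0) := by
  intro x hx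
  have hT : (0:ℝ) ≤ x + 1 := by linarith [hx.out]
  have h1 : ContinuousOn (fun u => ∫ τ in (0:ℝ)..u, a τ) (Set.Icc 0 (x+1)) := by
    have := continuousOn_primitive_interval (a := (0:ℝ)) (b := x+1) (f := a) (μ := volume) ?_
    · rwa [uIcc_of_le hT] at this
    · rw [uIcc_of_le hT]
      exact ((amono' ha0 hapos hamono).mono Icc_subset_Ici_self).integrableOn_isCompact
        isCompact_Icc
  have h2 : ContinuousWithinAt A (Set.Icc 0 (x+1)) x := by
    refine (h1 x ⟨hx, by linarith [hx.out]⟩).congr (fun y hy => hAdef y hy.1) (hAdef x hx)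
  refine h2.mono_of_mem_nhdsWithin ?_
  have : Set.Icc 0 (x+1) = Set.Ici 0 ∩ Set.Iic (x+1) := (Set.Ici_inter_Iic).symm
  rw [this]
  exact Filter.inter_mem self_mem_nhdsWithin
    (nhdsWithin_le_nhds (Iic_mem_nhds (by linarith [hx.out])))

include ha0 hapos hamono hAdef in
private lemma Apos : ∀ t, 0 < t → 0 < A t := by
  intro t ht
  rw [hAdef t ht.le]
  exact intervalIntegral_pos_of_pos_on (aInt ha0 hapos hamono t ht.le)
    (fun x hx => hapos x hx.1) ht

end Aux

section Growth

variable {A a : ℝ → ℝ} {pm pp : ℝ}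

private lemma Aupper'
    (hAcont : ContinuousOn A (Set.Ici 0)) (hApos : ∀ t, 0 < t → 0 < A t)
    (hAd : ∀ x, 0 ≤ x → HasDerivWithinAt A (a x) (Set.Ici x) x)
    (hup : ∀ t, 0 < t → t * a t ≤ pp * A t)
    {p' : ℝ} (hp' : pp < p') :
    ∀ x, 1 ≤ x → A x ≤ A 1 * x ^ p' := by
  intro x hx
  have key : ∀ ⦃y⦄, y ∈ Set.Icc 1 x → A y ≤ A 1 * y ^ p' := by
    refine image_le_of_liminf_slope_right_lt_deriv_boundary'
      (f := A) (f' := a) (B := fun y => A 1 * y ^ p')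
      (B' := fun y => A 1 * (p' * y ^ (p' - 1))) ?hf ?hf' ?ha ?hB ?hB' ?bound
    case hf => exact hAcont.mono fun y hy => le_trans zero_le_one hy.1
    case hf' =>
      intro y hy r hr
      have hd := hAd y (le_trans zero_le_one hy.1)
      exact ((hd.Ioi_of_Ici).limsup_slope_le' (lt_irrefl y) hr).frequently
    case ha => simp
    case hB =>
      refine continuousOn_const.mul (ContinuousOn.rpow_const continuousOn_id ?_)
      intro y hy
      exact Or.inl (ne_of_gt (lt_of_lt_of_le zero_lt_one hy.1))
    case hB' =>
      intro y hy
      have h1 : (y:ℝ) ≠ 0 := ne_of_gt (lt_of_lt_of_le zero_lt_one hy.1)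
      exact ((Real.hasDerivAt_rpow_const (Or.inl h1)).const_mul (A 1)).hasDerivWithinAt
    case bound =>
      intro y hy hEq
      have hy0 : (0:ℝ) < y := lt_of_lt_of_le zero_lt_one hy.1
      have hAy : 0 < A y := hApos y hy0
      have h1 : a y ≤ pp * A y / y := by
        rw [le_div_iff₀ hy0]
        calc a y * y = y * a y := mul_comm _ _
        _ ≤ pp * A y := hup y hy0
      have h2 : A 1 * (p' * y ^ (p' - 1)) = p' * A y / y := by
        rw [hEq, Real.rpow_sub hy0, Real.rpow_one]
        ring
      show a y < A 1 * (p' * y ^ (p' - 1))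
      rw [h2]
      refine lt_of_le_of_lt h1 ?_
      gcongr
  exact key ⟨hx, le_rfl⟩

private lemma Aupper
    (hAcont : ContinuousOn A (Set.Ici 0)) (hApos : ∀ t, 0 < t → 0 < A t)
    (hAd : ∀ x, 0 ≤ x → HasDerivWithinAt A (a x) (Set.Ici x) x)
    (hup : ∀ t, 0 < t → t * a t ≤ pp * A t) :
    ∀ x, 1 ≤ x → A x ≤ A 1 * x ^ pp := by
  intro x hx
  have hx0 : (0:ℝ) < x := lt_of_lt_of_le zero_lt_one hx
  have ht : Tendsto (fun p' : ℝ => A 1 * x ^ p') (𝓝[>] pp) (𝓝 (A 1 * x ^ pp)) := by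
    refine Tendsto.mono_left ?_ nhdsWithin_le_nhds
    exact ((Real.continuousAt_const_rpow (ne_of_gt hx0)).const_mul (A 1) : ContinuousAt _ _)
  refine ge_of_tendsto ht ?_
  filter_upwards [self_mem_nhdsWithin] with p' hp'
  exact Aupper' hAcont hApos hAd hup hp' x hx

private lemma Alower
    (hAcont : ContinuousOn A (Set.Ici 0)) (hApos : ∀ t, 0 < t → 0 < A t)
    (hAd : ∀ x, 0 ≤ x → HasDerivWithinAt A (a x) (Set.Ici x) x)
    (hlo : ∀ t, 0 < t → pm * A t ≤ t * a t) :
    ∀ x, 1 ≤ x → A 1 * x ^ pm ≤ A x := by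
  have key : ∀ p' : ℝ, p' < pm → ∀ x, 1 ≤ x → A 1 * x ^ p' ≤ A x := by
    intro p' hp' x hx
    have key2 : ∀ ⦃y⦄, y ∈ Set.Icc 1 x → A 1 * y ^ p' ≤ A y := by
      refine image_le_of_liminf_slope_right_lt_deriv_boundary'
        (f := fun y => A 1 * y ^ p') (f' := fun y => A 1 * (p' * y ^ (p' - 1)))
        (B := A) (B' := a) ?hf ?hf' ?ha ?hB ?hB' ?bound
      case hf =>
        refine continuousOn_const.mul (ContinuousOn.rpow_const continuousOn_id ?_)
        intro y hy
        exact Or.inl (ne_of_gt (lt_of_lt_of_le zero_lt_one hy.1))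
      case hf' =>
        intro y hy r hr
        have h1 : (y:ℝ) ≠ 0 := ne_of_gt (lt_of_lt_of_le zero_lt_one hy.1)
        have hd := ((Real.hasDerivAt_rpow_const (p := p') (Or.inl h1)).const_mul
          (A 1)).hasDerivWithinAt (s := Set.Ioi y)
        exact (hd.limsup_slope_le' (lt_irrefl y) hr).frequently
      case ha => simp
      case hB => exact hAcont.mono fun y hy => le_trans zero_le_one hy.1
      case hB' => exact fun y hy => hAd y (le_trans zero_le_one hy.1)
      case bound =>
        intro y hy hEq
        have hy0 : (0:ℝ) < y := lt_of_lt_of_le zero_lt_one hy.1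
        have hAy : 0 < A y := hApos y hy0
        have h1 : pm * A y / y ≤ a y := by
          rw [div_le_iff₀ hy0]
          calc pm * A y ≤ y * a y := hlo y hy0
          _ = a y * y := mul_comm _ _
        have h2 : A 1 * (p' * y ^ (p' - 1)) = p' * A y / y := by
          rw [← hEq, Real.rpow_sub hy0, Real.rpow_one]
          ring
        show A 1 * (p' * y ^ (p' - 1)) < a y
        rw [h2]
        refine lt_of_lt_of_le ?_ h1
        gcongr
    exact key2 ⟨hx, le_rfl⟩
  intro x hx
  have hx0 : (0:ℝ) < x := lt_of_lt_of_le zero_lt_one hx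
  have ht : Tendsto (fun p' : ℝ => A 1 * x ^ p') (𝓝[<] pm) (𝓝 (A 1 * x ^ pm)) := by
    refine Tendsto.mono_left ?_ nhdsWithin_le_nhds
    exact ((Real.continuousAt_const_rpow (ne_of_gt hx0)).const_mul (A 1) : ContinuousAt _ _)
  refine le_of_tendsto ht ?_
  filter_upwards [self_mem_nhdsWithin] with p' hp'
  exact key p' hp' x hx

end Growth

section Fb

variable {A : ℝ → ℝ} {pm pp : ℝ} {n : ℕ}

private lemma gcont (hAcont : ContinuousOn A (Set.Ici 0)) (hApos : ∀ t, 0 < t → 0 < A t) :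
    ContinuousOn (fun τ : ℝ => (τ / A τ) ^ ((1:ℝ)/((n:ℝ)-1))) (Set.Ioi 0) := by
  refine ContinuousOn.rpow_const ?_ ?_
  · exact (continuousOn_id.div (hAcont.mono fun y hy => Set.mem_Ici.mpr (le_of_lt (Set.mem_Ioi.mp hy)))
      (fun y hy => ne_of_gt (hApos y hy)))
  · intro y hy
    exact Or.inl (ne_of_gt (div_pos hy (hApos y hy)))

private lemma gInt (hAcont : ContinuousOn A (Set.Ici 0)) (hApos : ∀ t, 0 < t → 0 < A t)
    (hA3 : ∃ d : ℝ, 0 < d ∧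
      IntegrableOn (fun t : ℝ => (t / A t) ^ ((1:ℝ) / ((n:ℝ) - 1))) (Set.Ioc 0 d) volume) :
    ∀ t : ℝ, 0 ≤ t →
      IntervalIntegrable (fun τ : ℝ => (τ / A τ) ^ ((1:ℝ)/((n:ℝ)-1))) volume 0 t := by
  obtain ⟨d, hd, hdint⟩ := hA3
  intro t ht
  rw [intervalIntegrable_iff_integrableOn_Ioc_of_le ht]
  have h2 : IntegrableOn (fun τ : ℝ => (τ / A τ) ^ ((1:ℝ)/((n:ℝ)-1)))
      (Set.Icc d (max d t)) volume := by
    refine ContinuousOn.integrableOn_compact isCompact_Icc ?_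
    exact (gcont hAcont hApos).mono fun y hy => lt_of_lt_of_le hd hy.1
  refine (hdint.union h2).mono_set ?_
  intro y hy
  rcases le_or_gt y d with h | h
  · exact Or.inl ⟨hy.1, h⟩
  · exact Or.inr ⟨h.le, le_max_of_le_right hy.2⟩

private lemma Fbounds (hn : 2 ≤ n)
    (hAcont : ContinuousOn A (Set.Ici 0)) (hApos : ∀ t, 0 < t → 0 < A t)
    (hpm : 1 < pm) (hpmpp : pm ≤ pp) (hppn : pp < n)
    (hup : ∀ x : ℝ, 1 ≤ x → A x ≤ A 1 * x ^ pp)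
    (hlo : ∀ x : ℝ, 1 ≤ x → A 1 * x ^ pm ≤ A x)
    (hA3 : ∃ d : ℝ, 0 < d ∧
      IntegrableOn (fun t : ℝ => (t / A t) ^ ((1:ℝ) / ((n:ℝ) - 1))) (Set.Ioc 0 d) volume) :
    ∃ m M : ℝ, 0 < m ∧ 0 < M ∧ ∀ t : ℝ, 1 < t →
      m * t ^ (((n:ℝ)-pp)/((n:ℝ)-1)) ≤
        (∫ τ in (0:ℝ)..t, (τ / A τ) ^ ((1:ℝ)/((n:ℝ)-1))) ∧
      (∫ τ in (0:ℝ)..t, (τ / A τ) ^ ((1:ℝ)/((n:ℝ)-1))) ≤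
        M * t ^ (((n:ℝ)-pm)/((n:ℝ)-1)) := by
  have hn1 : (1:ℝ) < (n:ℝ) := by exact_mod_cast lt_of_lt_of_le one_lt_two (by exact_mod_cast hn)
  have hn1' : (0:ℝ) < (n:ℝ) - 1 := by linarith
  set r : ℝ := (1:ℝ)/((n:ℝ)-1) with hr
  have hrpos : 0 < r := by positivity
  have hA1 : 0 < A 1 := hApos 1 zero_lt_one
  set g : ℝ → ℝ := fun τ : ℝ => (τ / A τ) ^ r with hg
  set c₀ : ℝ := ((A 1)⁻¹) ^ r with hc₀
  have hc₀pos : 0 < c₀ := Real.rpow_pos_of_pos (by positivity) r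
  set e₁ : ℝ := (1 - pp) * r with he₁
  set e₂ : ℝ := (1 - pm) * r with he₂
  set β₁ : ℝ := ((n:ℝ)-pp)/((n:ℝ)-1) with hβ₁
  set β₂ : ℝ := ((n:ℝ)-pm)/((n:ℝ)-1) with hβ₂
  have hβ₁e : e₁ + 1 = β₁ := by rw [he₁, hβ₁, hr]; field_simp; ring
  have hβ₂e : e₂ + 1 = β₂ := by rw [he₂, hβ₂, hr]; field_simp; ring
  have hβ₁pos : 0 < β₁ := by rw [hβ₁]; apply div_pos <;> linarith
  have hβ₂pos : 0 < β₂ := by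
    rw [hβ₂]; apply div_pos ?_ hn1'; linarith
  -- pointwise bounds on [1, ∞)
  have hgl : ∀ τ : ℝ, 1 ≤ τ → c₀ * τ ^ e₁ ≤ g τ := by
    intro τ hτ
    have hτ0 : (0:ℝ) < τ := lt_of_lt_of_le zero_lt_one hτ
    have hbase : (A 1)⁻¹ * τ ^ (1 - pp) = τ / (A 1 * τ ^ pp) := by
      rw [Real.rpow_sub hτ0, Real.rpow_one]
      field_simp
    have h1 : c₀ * τ ^ e₁ = ((A 1)⁻¹ * τ ^ (1 - pp)) ^ r := by
      rw [Real.mul_rpow (by positivity) (by positivity), hc₀, he₁,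
        Real.rpow_mul hτ0.le]
    rw [h1, hbase]
    refine Real.rpow_le_rpow (by positivity) ?_ hrpos.le
    exact div_le_div_of_nonneg_left hτ0.le (hApos τ hτ0) (hup τ hτ)
  have hgu : ∀ τ : ℝ, 1 ≤ τ → g τ ≤ c₀ * τ ^ e₂ := by
    intro τ hτ
    have hτ0 : (0:ℝ) < τ := lt_of_lt_of_le zero_lt_one hτ
    have hbase : (A 1)⁻¹ * τ ^ (1 - pm) = τ / (A 1 * τ ^ pm) := by
      rw [Real.rpow_sub hτ0, Real.rpow_one]
      field_simp
    have h1 : c₀ * τ ^ e₂ = ((A 1)⁻¹ * τ ^ (1 - pm)) ^ r := by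
      rw [Real.mul_rpow (by positivity) (by positivity), hc₀, he₂,
        Real.rpow_mul hτ0.le]
    rw [h1, hbase]
    refine Real.rpow_le_rpow (div_nonneg hτ0.le (hApos τ hτ0).le) ?_ hrpos.le
    refine div_le_div_of_nonneg_left hτ0.le ?_ (hlo τ hτ)
    exact mul_pos hA1 (Real.rpow_pos_of_pos hτ0 pm)
  -- F 1 > 0
  have hF1pos : 0 < ∫ τ in (0:ℝ)..1, g τ := by
    refine intervalIntegral_pos_of_pos_on (gInt hAcont hApos hA3 1 zero_le_one) ?_ zero_lt_one
    intro x hx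
    exact Real.rpow_pos_of_pos (div_pos hx.1 (hApos x hx.1)) r
  set F1 : ℝ := ∫ τ in (0:ℝ)..1, g τ with hF1
  refine ⟨min F1 (c₀/β₁), F1 + c₀/β₂, lt_min hF1pos (by positivity), by positivity, ?_⟩
  intro t ht
  have ht0 : (0:ℝ) < t := lt_trans zero_lt_one ht
  have h1t : IntervalIntegrable g volume 1 t := by
    refine ContinuousOn.intervalIntegrable ?_
    refine (gcont hAcont hApos).mono ?_
    rw [uIcc_of_le ht.le]
    intro y hy
    exact lt_of_lt_of_le zero_lt_one hy.1
  have hsplit : (∫ τ in (0:ℝ)..t, g τ) = F1 + ∫ τ in (1:ℝ)..t, g τ := by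
    rw [hF1, integral_add_adjacent_intervals (gInt hAcont hApos hA3 1 zero_le_one) h1t]
  have hInt₁ : IntervalIntegrable (fun τ : ℝ => c₀ * τ ^ e₁) volume 1 t := by
    refine ContinuousOn.intervalIntegrable (continuousOn_const.mul ?_)
    refine ContinuousOn.rpow_const continuousOn_id ?_
    rw [uIcc_of_le ht.le]
    exact fun y hy => Or.inl (by dsimp; intro h; rw [h] at hy; linarith [hy.1])
  have hInt₂ : IntervalIntegrable (fun τ : ℝ => c₀ * τ ^ e₂) volume 1 t := by
    refine ContinuousOn.intervalIntegrable (continuousOn_const.mul ?_)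
    refine ContinuousOn.rpow_const continuousOn_id ?_
    rw [uIcc_of_le ht.le]
    exact fun y hy => Or.inl (by dsimp; intro h; rw [h] at hy; linarith [hy.1])
  have he₁gt : (-1:ℝ) < e₁ := by
    rw [he₁, hr, mul_one_div, neg_lt, ← neg_div, div_lt_iff₀ hn1']
    nlinarith
  have he₂gt : (-1:ℝ) < e₂ := by
    rw [he₂, hr, mul_one_div, neg_lt, ← neg_div, div_lt_iff₀ hn1']
    nlinarith
  have hpow₁ : (∫ τ in (1:ℝ)..t, τ ^ e₁) = (t ^ β₁ - 1)/β₁ := by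
    rw [integral_rpow (Or.inl he₁gt), hβ₁e, Real.one_rpow]
  have hpow₂ : (∫ τ in (1:ℝ)..t, τ ^ e₂) = (t ^ β₂ - 1)/β₂ := by
    rw [integral_rpow (Or.inl he₂gt), hβ₂e, Real.one_rpow]
  have hlow : c₀ * ((t ^ β₁ - 1)/β₁) ≤ ∫ τ in (1:ℝ)..t, g τ := by
    rw [← hpow₁, ← intervalIntegral.integral_const_mul]
    exact integral_mono_on ht.le hInt₁ h1t (fun x hx => hgl x hx.1)
  have hupp : (∫ τ in (1:ℝ)..t, g τ) ≤ c₀ * ((t ^ β₂ - 1)/β₂) := by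
    rw [← hpow₂, ← intervalIntegral.integral_const_mul]
    exact integral_mono_on ht.le h1t hInt₂ (fun x hx => hgu x hx.1)
  have htβ₁ : 1 ≤ t ^ β₁ := by
    calc (1:ℝ) = 1 ^ β₁ := (Real.one_rpow _).symm
    _ ≤ t ^ β₁ := Real.rpow_le_rpow zero_le_one ht.le hβ₁pos.le
  have htβ₂ : 1 ≤ t ^ β₂ := by
    calc (1:ℝ) = 1 ^ β₂ := (Real.one_rpow _).symm
    _ ≤ t ^ β₂ := Real.rpow_le_rpow zero_le_one ht.le hβ₂pos.le
  constructor
  · rw [hsplit]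
    have e1 : c₀ * ((t ^ β₁ - 1)/β₁) = (c₀/β₁) * (t ^ β₁ - 1) := by ring
    have e2 : min F1 (c₀/β₁) * (t ^ β₁ - 1) ≤ (c₀/β₁) * (t ^ β₁ - 1) :=
      mul_le_mul_of_nonneg_right (min_le_right _ _) (by linarith)
    have e3 : min F1 (c₀/β₁) ≤ F1 := min_le_left _ _
    have e4 : min F1 (c₀/β₁) * t ^ β₁
        = min F1 (c₀/β₁) * (t ^ β₁ - 1) + min F1 (c₀/β₁) := by ring
    linarith [hlow]
  · rw [hsplit]
    have e1 : c₀ * ((t ^ β₂ - 1)/β₂) = (c₀/β₂) * (t ^ β₂ - 1) := by ring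
    have e2 : F1 ≤ F1 * t ^ β₂ := le_mul_of_one_le_right hF1pos.le htβ₂
    have e3 : (0:ℝ) < c₀/β₂ := by positivity
    have e4 : (F1 + c₀/β₂) * t ^ β₂ = F1 * t ^ β₂ + (c₀/β₂) * t ^ β₂ := by ring
    have e5 : (c₀/β₂) * (t ^ β₂ - 1) ≤ (c₀/β₂) * t ^ β₂ :=
      mul_le_mul_of_nonneg_left (by linarith) e3.le
    linarith [hupp]

end Fb


/-- Lemma 3.1 (est.H): power bounds for `H` and its inverse. -/
theorem Hfun_bounds (n : ℕ) (hn : 2 ≤ n) (a A : ℝ → ℝ) (pm pp : ℝ)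
    (hA : IsYoungPair a A) (hpm : 1 < pm) (hpmpp : pm ≤ pp) (hppn : pp < n)
    (hδ : ∀ t, 0 < t → pm ≤ t * a t / A t ∧ t * a t / A t ≤ pp)
    (hA2 : ∃ K : ℝ, 0 < K ∧
      ¬ IntegrableOn (fun t : ℝ => (t / A t) ^ ((1:ℝ) / ((n:ℝ) - 1))) (Set.Ioi K) volume)
    (hA3 : ∃ d : ℝ, 0 < d ∧
      IntegrableOn (fun t : ℝ => (t / A t) ^ ((1:ℝ) / ((n:ℝ) - 1))) (Set.Ioc 0 d) volume)
    (hHmono : StrictMonoOn (Hfun A n) (Set.Ici 0))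
    (Hinv : ℝ → ℝ)
    (hHinv₁ : ∀ t, 0 ≤ t → Hinv (Hfun A n t) = t)
    (hHinv₂ : ∀ s, 0 ≤ s → Hfun A n (Hinv s) = s) :
    (∃ C₁ C₂ : ℝ, 0 < C₁ ∧ 0 < C₂ ∧ ∀ t : ℝ, 1 < t →
      C₁ * t ^ (((n:ℝ) - pp) / (n:ℝ)) ≤ Hfun A n t ∧
      Hfun A n t ≤ C₂ * t ^ (((n:ℝ) - pm) / (n:ℝ))) ∧
    (∃ c₁ c₂ : ℝ, 0 < c₁ ∧ 0 < c₂ ∧ ∀ t : ℝ, 1 < t →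
      c₁ * t ^ ((n:ℝ) / ((n:ℝ) - pm)) ≤ Hinv t ∧
      Hinv t ≤ c₂ * t ^ ((n:ℝ) / ((n:ℝ) - pp))) := by
  obtain ⟨ha0, hapos, harc, hamono, hAdef⟩ := hA
  have hn1 : (1:ℝ) < (n:ℝ) := by exact_mod_cast lt_of_lt_of_le one_lt_two (by exact_mod_cast hn)
  have hn0 : (0:ℝ) < (n:ℝ) := by linarith
  have hn1' : (0:ℝ) < (n:ℝ) - 1 := by linarith
  have hpmn : pm < (n:ℝ) := lt_of_le_of_lt hpmpp hppn
  have hAcont : ContinuousOn A (Set.Ici 0) := Acont ha0 hapos hamono hAdef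
  have hApos : ∀ t, 0 < t → 0 < A t := Apos ha0 hapos hamono hAdef
  have hAd : ∀ x, 0 ≤ x → HasDerivWithinAt A (a x) (Set.Ici x) x :=
    Aderiv ha0 hapos harc hamono hAdef
  have hup : ∀ t : ℝ, 0 < t → t * a t ≤ pp * A t := by
    intro t ht
    have := (hδ t ht).2
    rw [div_le_iff₀ (hApos t ht)] at this
    linarith
  have hlo : ∀ t : ℝ, 0 < t → pm * A t ≤ t * a t := by
    intro t ht
    have := (hδ t ht).1
    rw [le_div_iff₀ (hApos t ht)] at this
    linarith
  have hAu : ∀ x : ℝ, 1 ≤ x → A x ≤ A 1 * x ^ pp := Aupper hAcont hApos hAd hup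
  have hAl : ∀ x : ℝ, 1 ≤ x → A 1 * x ^ pm ≤ A x := Alower hAcont hApos hAd hlo
  obtain ⟨m, M, hm, hM, hFb⟩ := Fbounds hn hAcont hApos hpm hpmpp hppn hAu hAl hA3
  set κ : ℝ := ((n:ℝ) - 1) / (n:ℝ) with hκ
  have hκpos : 0 < κ := by positivity
  set δp : ℝ := ((n:ℝ) - pp) / (n:ℝ) with hδp
  set δm : ℝ := ((n:ℝ) - pm) / (n:ℝ) with hδm
  have hδppos : 0 < δp := by rw [hδp]; apply div_pos <;> linarith
  have hδmpos : 0 < δm := by rw [hδm]; apply div_pos <;> linarith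
  set β₁ : ℝ := ((n:ℝ)-pp)/((n:ℝ)-1) with hβ₁
  set β₂ : ℝ := ((n:ℝ)-pm)/((n:ℝ)-1) with hβ₂
  have hid₁ : β₁ * κ = δp := by rw [hβ₁, hκ, hδp]; field_simp
  have hid₂ : β₂ * κ = δm := by rw [hβ₂, hκ, hδm]; field_simp
  set C₁ : ℝ := m ^ κ with hC₁
  set C₂ : ℝ := M ^ κ with hC₂
  have hC₁pos : 0 < C₁ := Real.rpow_pos_of_pos hm κ
  have hC₂pos : 0 < C₂ := Real.rpow_pos_of_pos hM κ
  have part1 : ∀ t : ℝ, 1 < t →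
      C₁ * t ^ δp ≤ Hfun A n t ∧ Hfun A n t ≤ C₂ * t ^ δm := by
    intro t ht
    have ht0 : (0:ℝ) < t := lt_trans zero_lt_one ht
    obtain ⟨h1, h2⟩ := hFb t ht
    have hFpos : (0:ℝ) ≤ (∫ τ in (0:ℝ)..t, (τ / A τ) ^ ((1:ℝ)/((n:ℝ)-1))) := by
      refine le_trans ?_ h1
      positivity
    constructor
    · have := Real.rpow_le_rpow (by positivity) h1 hκpos.le
      rw [Real.mul_rpow hm.le (by positivity), ← Real.rpow_mul ht0.le, hid₁] at this
      exact this
    · have := Real.rpow_le_rpow hFpos h2 hκpos.le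
      rw [Real.mul_rpow hM.le (by positivity), ← Real.rpow_mul ht0.le, hid₂] at this
      exact this
  refine ⟨⟨C₁, C₂, hC₁pos, hC₂pos, part1⟩, ?_⟩
  -- Part 2
  set γm : ℝ := (n:ℝ) / ((n:ℝ) - pm) with hγm
  set γp : ℝ := (n:ℝ) / ((n:ℝ) - pp) with hγp
  have hγmpos : 0 < γm := by rw [hγm]; apply div_pos <;> linarith
  have hγppos : 0 < γp := by rw [hγp]; apply div_pos <;> linarith
  have hidm : δm * γm = 1 := by
    rw [hδm, hγm, div_mul_div_comm, mul_comm]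
    exact div_self (ne_of_gt (mul_pos hn0 (by linarith)))
  have hidp : δp * γp = 1 := by
    rw [hδp, hγp, div_mul_div_comm, mul_comm]
    exact div_self (ne_of_gt (mul_pos hn0 (by linarith)))
  have hH0 : Hfun A n 0 = 0 := by
    simp only [Hfun, intervalIntegral.integral_same]
    exact Real.zero_rpow (div_ne_zero (by linarith) (by linarith))
  have hHcont : ∀ T : ℝ, 0 ≤ T → ContinuousOn (Hfun A n) (Set.Icc 0 T) := by
    intro T hT
    have hFc : ContinuousOn (fun t : ℝ => ∫ τ in (0:ℝ)..t, (τ / A τ) ^ ((1:ℝ)/((n:ℝ)-1)))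
        (Set.Icc 0 T) := by
      have := intervalIntegral.continuousOn_primitive_interval'
        (gInt hAcont hApos hA3 T hT) (by rw [uIcc_of_le hT]; exact Set.left_mem_Icc.2 hT)
      rwa [uIcc_of_le hT] at this
    exact hFc.rpow_const fun x hx => Or.inr hκpos.le
  have hsurj : ∀ s : ℝ, 0 ≤ s → ∃ u : ℝ, 0 ≤ u ∧ Hfun A n u = s := by
    intro s hs
    rcases eq_or_lt_of_le hs with h | h
    · exact ⟨0, le_rfl, by rw [hH0, ← h]⟩
    · set X : ℝ := (max 1 (s/C₁)) ^ (1/δp) with hX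
      set T : ℝ := max 2 X with hT
      have hT1 : (1:ℝ) < T := lt_of_lt_of_le one_lt_two (le_max_left _ _)
      have hT0 : (0:ℝ) ≤ T := by linarith
      have hHT : s ≤ Hfun A n T := by
        have h1 : max 1 (s/C₁) ≤ T ^ δp := by
          have hXT : X ≤ T := le_max_right _ _
          have hX0 : (0:ℝ) ≤ X := Real.rpow_nonneg (le_trans zero_le_one (le_max_left _ _)) _
          calc max 1 (s/C₁) = (max 1 (s/C₁)) ^ ((1/δp) * δp) := by
                rw [one_div_mul_cancel (ne_of_gt hδppos), Real.rpow_one]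
          _ = X ^ δp := by
                rw [hX, ← Real.rpow_mul (le_trans zero_le_one (le_max_left _ _))]
          _ ≤ T ^ δp := Real.rpow_le_rpow hX0 hXT hδppos.le
        have h2 : s ≤ C₁ * T ^ δp := by
          calc s = C₁ * (s/C₁) := by field_simp
          _ ≤ C₁ * max 1 (s/C₁) := by
                exact mul_le_mul_of_nonneg_left (le_max_right _ _) hC₁pos.le
          _ ≤ C₁ * T ^ δp := mul_le_mul_of_nonneg_left h1 hC₁pos.le
        exact le_trans h2 (part1 T hT1).1
      have := intermediate_value_Icc hT0 (hHcont T hT0)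
      have hmem : s ∈ Set.Icc (Hfun A n 0) (Hfun A n T) := by
        rw [hH0]; exact ⟨hs, hHT⟩
      obtain ⟨u, hu, huH⟩ := this hmem
      exact ⟨u, hu.1, huH⟩
  have hinv : ∀ s : ℝ, 0 ≤ s → 0 ≤ Hinv s := by
    intro s hs
    obtain ⟨u, hu0, huH⟩ := hsurj s hs
    rw [← huH, hHinv₁ u hu0]
    exact hu0
  set u₁ : ℝ := Hinv 1 with hu₁
  have hu₁0 : 0 ≤ u₁ := hinv 1 zero_le_one
  have hu₁H : Hfun A n u₁ = 1 := hHinv₂ 1 zero_le_one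
  have hu₁pos : 0 < u₁ := by
    rcases eq_or_lt_of_le hu₁0 with h | h
    · exfalso; rw [← h, hH0] at hu₁H; norm_num at hu₁H
    · exact h
  set Smax : ℝ := max 1 (Hfun A n 1) with hSmax
  have hSmax1 : (1:ℝ) ≤ Smax := le_max_left _ _
  have hSmax0 : (0:ℝ) < Smax := lt_of_lt_of_le zero_lt_one hSmax1
  set c₁ : ℝ := min (u₁ / Smax ^ γm) ((C₂ ^ γm)⁻¹) with hc₁
  set c₂ : ℝ := max 1 ((C₁ ^ γp)⁻¹) with hc₂
  have hc₁pos : 0 < c₁ := by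
    refine lt_min ?_ ?_
    · exact div_pos hu₁pos (Real.rpow_pos_of_pos hSmax0 _)
    · exact inv_pos.2 (Real.rpow_pos_of_pos hC₂pos _)
  have hc₂pos : 0 < c₂ := lt_of_lt_of_le zero_lt_one (le_max_left _ _)
  refine ⟨c₁, c₂, hc₁pos, hc₂pos, ?_⟩
  intro t ht
  have ht0 : (0:ℝ) < t := lt_trans zero_lt_one ht
  set u : ℝ := Hinv t with hu
  have hu0 : 0 ≤ u := hinv t ht0.le
  have huH : Hfun A n u = t := hHinv₂ t ht0.le
  have hu₁u : u₁ < u := by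
    by_contra h
    push_neg at h
    have h2 : Hfun A n u ≤ Hfun A n u₁ := hHmono.monotoneOn hu0 hu₁0 h
    rw [huH, hu₁H] at h2
    linarith
  have htγm0 : (0:ℝ) ≤ t ^ γm := (Real.rpow_pos_of_pos ht0 _).le
  rcases le_or_gt u 1 with hcase | hcase
  · -- u ≤ 1
    have htS : t ≤ Smax := by
      have h2 : Hfun A n u ≤ Hfun A n 1 :=
        hHmono.monotoneOn hu0 (Set.mem_Ici.2 zero_le_one) hcase
      rw [huH] at h2
      exact le_trans h2 (le_max_right _ _)
    constructor
    · calc c₁ * t ^ γm ≤ (u₁ / Smax ^ γm) * Smax ^ γm := by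
            refine mul_le_mul (min_le_left _ _) ?_ htγm0 ?_
            · exact Real.rpow_le_rpow ht0.le htS hγmpos.le
            · exact (div_pos hu₁pos (Real.rpow_pos_of_pos hSmax0 _)).le
      _ = u₁ := div_mul_cancel₀ _ (ne_of_gt (Real.rpow_pos_of_pos hSmax0 _))
      _ ≤ u := hu₁u.le
    · have h1t : (1:ℝ) ≤ t ^ γp := by
        calc (1:ℝ) = 1 ^ γp := (Real.one_rpow _).symm
        _ ≤ t ^ γp := Real.rpow_le_rpow zero_le_one ht.le hγppos.le
      calc u ≤ 1 := hcase
      _ ≤ t ^ γp := h1t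
      _ = 1 * t ^ γp := (one_mul _).symm
      _ ≤ c₂ * t ^ γp := mul_le_mul_of_nonneg_right (le_max_left _ _) (by linarith)
  · -- 1 < u
    obtain ⟨hL, hU⟩ := part1 u hcase
    rw [huH] at hL hU
    have hupos : (0:ℝ) < u := lt_trans zero_lt_one hcase
    constructor
    · have h1 : t / C₂ ≤ u ^ δm := by
        rw [div_le_iff₀ hC₂pos, mul_comm]
        exact hU
      have h2 : (t / C₂) ^ γm ≤ (u ^ δm) ^ γm :=
        Real.rpow_le_rpow (div_nonneg ht0.le hC₂pos.le) h1 hγmpos.le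
      have h3 : (u ^ δm) ^ γm = u := by
        rw [← Real.rpow_mul hupos.le, hidm, Real.rpow_one]
      have h4 : (t / C₂) ^ γm = t ^ γm / C₂ ^ γm := Real.div_rpow ht0.le hC₂pos.le _
      have h5 : c₁ * t ^ γm ≤ (C₂ ^ γm)⁻¹ * t ^ γm :=
        mul_le_mul_of_nonneg_right (min_le_right _ _) htγm0
      calc c₁ * t ^ γm ≤ (C₂ ^ γm)⁻¹ * t ^ γm := h5
      _ = t ^ γm / C₂ ^ γm := by ring
      _ = (t / C₂) ^ γm := h4.symm
      _ ≤ (u ^ δm) ^ γm := h2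
      _ = u := h3
    · have h1 : u ^ δp ≤ t / C₁ := by
        rw [le_div_iff₀ hC₁pos, mul_comm]
        exact hL
      have h2 : (u ^ δp) ^ γp ≤ (t / C₁) ^ γp :=
        Real.rpow_le_rpow (Real.rpow_nonneg hupos.le _) h1 hγppos.le
      have h3 : (u ^ δp) ^ γp = u := by
        rw [← Real.rpow_mul hupos.le, hidp, Real.rpow_one]
      have h4 : (t / C₁) ^ γp = t ^ γp / C₁ ^ γp := Real.div_rpow ht0.le hC₁pos.le _
      calc u = (u ^ δp) ^ γp := h3.symm
      _ ≤ (t / C₁) ^ γp := h2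
      _ = t ^ γp / C₁ ^ γp := h4
      _ = (C₁ ^ γp)⁻¹ * t ^ γp := by ring
      _ ≤ c₂ * t ^ γp :=
        mul_le_mul_of_nonneg_right (le_max_right _ _) (Real.rpow_pos_of_pos ht0 _).le
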